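/- arXiv:1912.09883 — 2 statements merged into one kernel-verified Lean document; each statement's English description precedes it below -/
import Mathlib

section
/- Suppose n respondents rate K items on a common scale {1,…,m}, with ratings r_{j,k}, and suppose each item k is endowed with a CUB-Fuzzy system with l_b = 1, u_b = m, parameter π̂^{(k)} ∈ [0,1] and empirical distribution function F^{(k)}(r) = #{j : r_{j,k} ≤ r}/n, so that μ^{(k)}(r) + ν^{(k)}(r) + u^{(k)}(r) = 1 for every r. Let w_1,…,w_K ≥ 0 with Σ_k w_k = 1, and define the aggregated composite values μ̄ = (1/n)·Σ_{j=1}^n Σ_{k=1}^K w_k μ^{(k)}(r_{j,k}), ν̄ = (1/n)·Σ_{j=1}^n Σ_{k=1}^K w_k ν^{(k)}(r_{j,k}), and ū = 1 − μ̄ − ν̄. Then ū = Σ_{k=1}^K w_k (1 − π̂^{(k)})·(F^{(k)}(m − 1) − F^{(k)}(1)). -/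
/-- The aggregated composite uncertainty `ū = 1 - μ̄ - ν̄` of the IWAM aggregator
equals `∑ₖ wₖ (1 - π̂⁽ᵏ⁾)(F⁽ᵏ⁾(m-1) - F⁽ᵏ⁾(1))`. -/
theorem cub_fuzzy_composite_uncertainty
    (m n K : ℕ) (hm : 3 ≤ m) (hn : 0 < n) (hK : 0 < K)
    (R : Fin n → Fin K → ℕ) (hR : ∀ j k, 1 ≤ R j k ∧ R j k ≤ m)
    (piHat : Fin K → ℝ) (hpi : ∀ k, piHat k ∈ Set.Icc (0:ℝ) 1)
    (F : Fin K → ℕ → ℝ)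
    (hF : ∀ k t, F k t = ((Finset.univ.filter (fun j => R j k ≤ t)).card : ℝ) / n)
    (μ ν u : Fin K → ℕ → ℝ)
    (hu : ∀ k x, u k x = if 1 + 1 ≤ x ∧ x ≤ m - 1 then 1 - piHat k else 0)
    (hsum : ∀ k x, μ k x + ν k x + u k x = 1)
    (w : Fin K → ℝ) (hw0 : ∀ k, 0 ≤ w k) (hw1 : ∑ k, w k = 1)
    (μbar νbar ubar : ℝ)
    (hμbar : μbar = (1 / (n : ℝ)) * ∑ j, ∑ k, w k * μ k (R j k))
    (hνbar : νbar = (1 / (n : ℝ)) * ∑ j, ∑ k, w k * ν k (R j k))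
    (hubar : ubar = 1 - μbar - νbar) :
    ubar = ∑ k, w k * (1 - piHat k) * (F k (m - 1) - F k 1) := by
  have hn' : (n:ℝ) ≠ 0 := Nat.cast_ne_zero.mpr hn.ne'
  -- per-item key identity
  have key : ∀ k, (∑ j, u k (R j k)) = (1 - piHat k) * ((n:ℝ) * (F k (m-1) - F k 1)) := by
    intro k
    have hc2 : ((Finset.univ.filter (fun j => R j k ≤ m - 1)).card : ℝ)
        = ∑ j, (if R j k ≤ m - 1 then (1:ℝ) else 0) := by
      simp [Finset.sum_boole]
    have hc1 : ((Finset.univ.filter (fun j => R j k ≤ 1)).card : ℝ)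
        = ∑ j, (if R j k ≤ 1 then (1:ℝ) else 0) := by
      simp [Finset.sum_boole]
    have hF2 : (n:ℝ) * (F k (m-1) - F k 1)
        = (∑ j, (if R j k ≤ m - 1 then (1:ℝ) else 0)) - ∑ j, (if R j k ≤ 1 then (1:ℝ) else 0) := by
      rw [hF, hF, ← hc2, ← hc1]; field_simp
    rw [hF2, ← Finset.sum_sub_distrib, Finset.mul_sum]
    refine Finset.sum_congr rfl fun j _ => ?_
    rw [hu]
    have hjk := hR j k
    by_cases h1 : R j k ≤ 1
    · have hP : ¬(1 + 1 ≤ R j k ∧ R j k ≤ m - 1) := by omega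
      have h2 : R j k ≤ m - 1 := by omega
      rw [if_neg hP, if_pos h2, if_pos h1]; ring
    · by_cases h2 : R j k ≤ m - 1
      · have hP : (1 + 1 ≤ R j k ∧ R j k ≤ m - 1) := by omega
        rw [if_pos hP, if_pos h2, if_neg h1]; ring
      · have hP : ¬(1 + 1 ≤ R j k ∧ R j k ≤ m - 1) := by omega
        rw [if_neg hP, if_neg h2, if_neg h1]; ring
  -- total sum identity
  have hAB : (∑ j, ∑ k, w k * μ k (R j k)) + (∑ j, ∑ k, w k * ν k (R j k))
      + (∑ j, ∑ k, w k * u k (R j k)) = (n:ℝ) := by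
    rw [← Finset.sum_add_distrib, ← Finset.sum_add_distrib]
    have hj : ∀ j ∈ (Finset.univ : Finset (Fin n)),
        (∑ k, w k * μ k (R j k)) + (∑ k, w k * ν k (R j k)) + (∑ k, w k * u k (R j k)) = 1 := by
      intro j _
      rw [← Finset.sum_add_distrib, ← Finset.sum_add_distrib]
      have : ∀ k ∈ (Finset.univ : Finset (Fin K)),
          w k * μ k (R j k) + w k * ν k (R j k) + w k * u k (R j k) = w k := by
        intro k _
        linear_combination w k * hsum k (R j k)
      rw [Finset.sum_congr rfl this, hw1]
    rw [Finset.sum_congr rfl hj]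
    simp
  have hC : (∑ j, ∑ k, w k * u k (R j k))
      = (n:ℝ) * ∑ k, w k * (1 - piHat k) * (F k (m - 1) - F k 1) := by
    rw [Finset.sum_comm, Finset.mul_sum]
    refine Finset.sum_congr rfl fun k _ => ?_
    rw [← Finset.mul_sum, key k]
    ring
  subst hubar hμbar hνbar
  rw [hC] at hAB
  field_simp
  linarith [hAB]
end

section
/- The CUB-Fuzzy system is a valid Intuitionistic Fuzzy evaluation system: for every r ∈ {1,…,m}, one has 0 ≤ μ_A(r) ≤ 1, 0 ≤ ν_A(r) ≤ 1, and 0 ≤ μ_A(r) + ν_A(r) ≤ 1. -/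
/-- The CUB-Fuzzy system is a valid Intuitionistic Fuzzy evaluation system:
for every `r ∈ {1,…,m}`, `0 ≤ μ_A(r) ≤ 1`, `0 ≤ ν_A(r) ≤ 1` and
`0 ≤ μ_A(r) + ν_A(r) ≤ 1`. -/
theorem cub_fuzzy_is_valid_IFS
    (m lb ip ub : ℕ) (hm : 3 ≤ m) (hlb : 1 ≤ lb) (hlip : lb < ip)
    (hipub : ip < ub) (hub : ub ≤ m)
    (piHat : ℝ) (hpi0 : 0 ≤ piHat) (hpi1 : piHat ≤ 1)
    (F : ℕ → ℝ)
    (hFmono : ∀ s t, 1 ≤ s → s ≤ t → t ≤ m → F s ≤ F t)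
    (hFrange : ∀ t, 1 ≤ t → t ≤ m → F t ∈ Set.Icc (0:ℝ) 1)
    (hFa : F lb < F ip) (hFb : F ip < F (ub - 1))
    (μA νA uA : ℕ → ℝ)
    (hμ1 : ∀ r, 1 ≤ r → r ≤ lb → μA r = 0)
    (hμ2 : ∀ r, lb + 1 ≤ r → r ≤ ip →
      μA r = piHat / 2 - piHat / 2 * ((F ip - F r) / (F ip - F lb)))
    (hμ3 : ∀ r, ip ≤ r → r ≤ ub - 1 →
      μA r = piHat / 2 + piHat / 2 * ((F r - F ip) / (F (ub - 1) - F ip)))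
    (hμ4 : ∀ r, ub ≤ r → r ≤ m → μA r = 1)
    (huA : ∀ r, uA r = if lb + 1 ≤ r ∧ r ≤ ub - 1 then 1 - piHat else 0)
    (hνA : ∀ r, νA r = 1 - μA r - uA r) :
    ∀ r, 1 ≤ r → r ≤ m →
      0 ≤ μA r ∧ μA r ≤ 1 ∧ 0 ≤ νA r ∧ νA r ≤ 1 ∧
      0 ≤ μA r + νA r ∧ μA r + νA r ≤ 1 := by
  intro r hr1 hrm
  have hν := hνA r
  rcases le_or_gt r lb with h | h
  · have hμ := hμ1 r hr1 h
    have hc : ¬(lb + 1 ≤ r ∧ r ≤ ub - 1) := by omega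
    have hu : uA r = 0 := by rw [huA r, if_neg hc]
    refine ⟨by linarith, by linarith, by linarith, by linarith, by linarith, by linarith⟩
  rcases le_or_gt ub r with h2 | h2
  · have hμ := hμ4 r h2 hrm
    have hc : ¬(lb + 1 ≤ r ∧ r ≤ ub - 1) := by omega
    have hu : uA r = 0 := by rw [huA r, if_neg hc]
    refine ⟨by linarith, by linarith, by linarith, by linarith, by linarith, by linarith⟩
  have hc : lb + 1 ≤ r ∧ r ≤ ub - 1 := by omega
  have hu : uA r = 1 - piHat := by rw [huA r, if_pos hc]
  have key : 0 ≤ μA r ∧ μA r ≤ piHat := by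
    rcases le_or_gt r ip with h3 | h3
    · rw [hμ2 r (by omega) h3]
      have hFl : F lb ≤ F r := hFmono lb r hlb (by omega) (by omega)
      have hFr : F r ≤ F ip := hFmono r ip (by omega) h3 (by omega)
      have hd : 0 < F ip - F lb := by linarith
      have ht0 : 0 ≤ (F ip - F r) / (F ip - F lb) := div_nonneg (by linarith) hd.le
      have ht1 : (F ip - F r) / (F ip - F lb) ≤ 1 := by rw [div_le_one hd]; linarith
      constructor <;> nlinarith
    · rw [hμ3 r h3.le hc.2]
      have hFl : F ip ≤ F r := hFmono ip r (by omega) h3.le (by omega)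
      have hFr : F r ≤ F (ub - 1) := hFmono r (ub - 1) (by omega) hc.2 (by omega)
      have hd : 0 < F (ub - 1) - F ip := by linarith
      have ht0 : 0 ≤ (F r - F ip) / (F (ub - 1) - F ip) := div_nonneg (by linarith) hd.le
      have ht1 : (F r - F ip) / (F (ub - 1) - F ip) ≤ 1 := by rw [div_le_one hd]; linarith
      constructor <;> nlinarith
  obtain ⟨k0, k1⟩ := key
  refine ⟨by linarith, by linarith, by linarith, by linarith, by linarith, by linarith⟩
end
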